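/- (Yuan–Agrawal representation) Let 0 < α < 1, t > 0, and let y : [0,t] → ℝ be continuously differentiable. Then (1/Γ(1-α)) ∫₀^t (t-τ)^(-α) y'(τ) dτ = (2 sin(πα)/π) ∫₀^∞ z^(2α-1) (∫₀^t e^{-(t-τ)z²} y'(τ) dτ) dz. -/

import Mathlib

open Real MeasureTheory intervalIntegral

private lemma ya_gauss {α : ℝ} (hα : 0 < α) {s : ℝ} (hs : 0 < s) :
    ∫ z in Set.Ioi (0:ℝ), z ^ (2*α-1) * Real.exp (-s * z^2) = Real.Gamma α / 2 * s ^ (-α) := by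
  have h := integral_rpow_mul_exp_neg_mul_rpow (p := 2) (q := 2*α-1) (b := s) two_pos
    (by linarith) hs
  have h2 : ∀ x : ℝ, x ^ (2:ℝ) = x ^ 2 := fun x => by
    rw [show (2:ℝ) = ((2:ℕ):ℝ) by norm_num, Real.rpow_natCast]
  simp_rw [h2] at h
  rw [h, show (2*α-1+1)/2 = α by ring, show -(2*α-1+1)/2 = -α by ring]
  ring

private lemma ya_integrable {α t : ℝ} (hα1 : α < 1) (ht : 0 < t)
    {h : ℝ → ℝ} (hc : Continuous h) :
    IntegrableOn (fun τ => (t - τ) ^ (-α) * h τ) (Set.Ioo 0 t) := by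
  have h1 : IntervalIntegrable (fun x : ℝ => x ^ (-α)) volume 0 t :=
    intervalIntegral.intervalIntegrable_rpow' (by linarith)
  have h2 : IntervalIntegrable (fun τ : ℝ => (t - τ) ^ (-α)) volume 0 t := by
    have := (h1.comp_sub_left t).symm
    simpa using this
  have h3 : IntegrableOn (fun τ : ℝ => (t - τ) ^ (-α)) (Set.Ioo 0 t) :=
    (intervalIntegrable_iff_integrableOn_Ioo_of_le ht.le).mp h2
  obtain ⟨M, hM⟩ := isCompact_Icc.exists_bound_of_continuousOn (f := h)
    (s := Set.Icc (0:ℝ) t) hc.continuousOn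
  refine (Integrable.bdd_mul (c := M) h3 hc.aestronglyMeasurable.restrict ?_).congr
    (Filter.Eventually.of_forall fun τ => mul_comm _ _)
  rw [ae_restrict_iff' measurableSet_Ioo]
  filter_upwards with τ hτ
  exact hM τ ⟨hτ.1.le, hτ.2.le⟩

theorem yuan_agrawal_representation (α t : ℝ) (hα : 0 < α) (hα1 : α < 1) (ht : 0 < t)
    (y y' : ℝ → ℝ)
    (hy : ∀ τ ∈ Set.Icc (0 : ℝ) t, HasDerivAt y (y' τ) τ)
    (hy' : ContinuousOn y' (Set.Icc (0 : ℝ) t)) :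
    (1 / Real.Gamma (1 - α)) * ∫ τ in (0 : ℝ)..t, (t - τ) ^ (-α) * y' τ =
      (2 * Real.sin (Real.pi * α) / Real.pi) *
        ∫ z in Set.Ioi (0 : ℝ),
          z ^ (2 * α - 1) * ∫ τ in (0 : ℝ)..t, Real.exp (-(t - τ) * z ^ 2) * y' τ := by
  clear hy
  -- replace y' with a globally continuous extension g
  obtain ⟨g, hgc, hg_eq⟩ : ∃ g : ℝ → ℝ, Continuous g ∧ ∀ τ ∈ Set.Icc (0:ℝ) t, g τ = y' τ := by
    refine ⟨Set.IccExtend ht.le ((Set.Icc (0:ℝ) t).restrict y'), ?_, ?_⟩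
    · exact Continuous.Icc_extend' (continuousOn_iff_continuous_restrict.mp hy')
    · intro τ hτ; exact Set.IccExtend_of_mem ht.le _ hτ
  have e1 : (∫ τ in (0:ℝ)..t, (t - τ) ^ (-α) * y' τ) =
      ∫ τ in (0:ℝ)..t, (t - τ) ^ (-α) * g τ := by
    apply intervalIntegral.integral_congr
    intro τ hτ
    rw [Set.uIcc_of_le ht.le] at hτ
    show (t - τ) ^ (-α) * y' τ = (t - τ) ^ (-α) * g τ
    rw [hg_eq τ hτ]
  have e2 : ∀ z : ℝ, (∫ τ in (0:ℝ)..t, Real.exp (-(t - τ) * z ^ 2) * y' τ) =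
      ∫ τ in (0:ℝ)..t, Real.exp (-(t - τ) * z ^ 2) * g τ := by
    intro z
    apply intervalIntegral.integral_congr
    intro τ hτ
    rw [Set.uIcc_of_le ht.le] at hτ
    show Real.exp (-(t - τ) * z ^ 2) * y' τ = Real.exp (-(t - τ) * z ^ 2) * g τ
    rw [hg_eq τ hτ]
  rw [e1]
  simp_rw [e2]
  clear e1 e2 hg_eq hy'
  -- convert interval integrals to integrals over Ioo 0 t
  have conv : ∀ f : ℝ → ℝ, (∫ τ in (0:ℝ)..t, f τ) = ∫ τ in Set.Ioo 0 t, f τ := by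
    intro f
    rw [intervalIntegral.integral_of_le ht.le]
    exact (setIntegral_congr_set Ioo_ae_eq_Ioc).symm
  rw [conv]
  simp_rw [conv]
  set μ := (volume : Measure ℝ).restrict (Set.Ioi 0) with hμ
  set ν := (volume : Measure ℝ).restrict (Set.Ioo 0 t) with hν
  set F : ℝ × ℝ → ℝ := fun p => p.1 ^ (2*α-1) * (Real.exp (-(t - p.2) * p.1 ^ 2) * g p.2)
    with hF
  have hmeas : AEStronglyMeasurable F (μ.prod ν) := by
    have m1 : Measurable fun p : ℝ × ℝ => p.1 ^ (2*α-1) :=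
      measurable_fst.pow measurable_const
    have m2 : Continuous fun p : ℝ × ℝ => Real.exp (-(t - p.2) * p.1 ^ 2) * g p.2 := by
      fun_prop
    exact (m1.mul m2.measurable).aestronglyMeasurable
  obtain ⟨M, hM⟩ := isCompact_Icc.exists_bound_of_continuousOn (f := g)
    (s := Set.Icc (0:ℝ) t) hgc.continuousOn
  have hint : Integrable F (μ.prod ν) := by
    rw [integrable_prod_iff' hmeas]
    constructor
    · rw [ae_restrict_iff' measurableSet_Ioo]
      filter_upwards with τ hτ
      have hs : 0 < t - τ := by linarith [hτ.2]
      have := (integrableOn_rpow_mul_exp_neg_mul_sq hs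
        (show (-1:ℝ) < 2*α-1 by linarith)).mul_const (g τ)
      simpa only [hF, mul_assoc] using this
    · have key : ∀ τ ∈ Set.Ioo (0:ℝ) t,
          (∫ z, ‖F (z, τ)‖ ∂μ) = Real.Gamma α / 2 * ((t - τ) ^ (-α) * ‖g τ‖) := by
        intro τ hτ
        have hs : 0 < t - τ := by linarith [hτ.2]
        have step : (∫ z, ‖F (z, τ)‖ ∂μ) =
            ∫ z in Set.Ioi (0:ℝ), (z ^ (2*α-1) * Real.exp (-(t - τ) * z ^ 2)) * ‖g τ‖ := by
          rw [hμ]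
          apply setIntegral_congr_fun measurableSet_Ioi
          intro z hz
          simp only [hF, norm_mul, Real.norm_eq_abs, abs_of_nonneg (Real.exp_pos _).le,
            abs_of_nonneg (Real.rpow_nonneg (le_of_lt hz) _)]
          ring
        rw [step, MeasureTheory.integral_mul_const, ← mul_assoc]
        congr 1
        exact ya_gauss hα hs
      refine (((ya_integrable hα1 ht (h := fun τ => ‖g τ‖)
        hgc.norm).const_mul (Real.Gamma α / 2)).congr ?_)
      filter_upwards [ae_restrict_mem measurableSet_Ioo] with τ hτ
      exact (key τ hτ).symm
  have swap : (∫ z, ∫ τ, F (z, τ) ∂ν ∂μ) = ∫ τ, ∫ z, F (z, τ) ∂μ ∂ν :=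
    integral_integral_swap (f := fun z τ => F (z, τ)) hint
  have lhs_eq : (∫ z in Set.Ioi (0:ℝ),
      z ^ (2*α-1) * ∫ τ in Set.Ioo 0 t, Real.exp (-(t - τ) * z ^ 2) * g τ) =
      ∫ z, ∫ τ, F (z, τ) ∂ν ∂μ := by
    apply setIntegral_congr_fun measurableSet_Ioi
    intro z _
    show z ^ (2*α-1) * (∫ τ in Set.Ioo 0 t, Real.exp (-(t - τ) * z ^ 2) * g τ) =
      ∫ τ, F (z, τ) ∂ν
    rw [← MeasureTheory.integral_const_mul]
  have rhs_eq : (∫ τ, ∫ z, F (z, τ) ∂μ ∂ν) =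
      Real.Gamma α / 2 * ∫ τ in Set.Ioo 0 t, (t - τ) ^ (-α) * g τ := by
    rw [← MeasureTheory.integral_const_mul]
    apply setIntegral_congr_fun measurableSet_Ioo
    intro τ hτ
    have hs : 0 < t - τ := by linarith [hτ.2]
    have key2 : (∫ z, F (z, τ) ∂μ) =
        (∫ z in Set.Ioi (0:ℝ), z ^ (2*α-1) * Real.exp (-(t - τ) * z ^ 2)) * g τ := by
      rw [← MeasureTheory.integral_mul_const]
      apply MeasureTheory.integral_congr_ae
      filter_upwards with z
      show F (z, τ) = _
      simp only [hF]; ring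
    show (∫ z, F (z, τ) ∂μ) = Real.Gamma α / 2 * ((t - τ) ^ (-α) * g τ)
    rw [key2, ya_gauss hα hs]
    ring
  rw [lhs_eq, swap, rhs_eq]
  have hsin : 0 < Real.sin (Real.pi * α) := by
    apply Real.sin_pos_of_pos_of_lt_pi
    · positivity
    · nlinarith [Real.pi_pos]
  have hG1 : 0 < Real.Gamma (1 - α) := Real.Gamma_pos_of_pos (by linarith)
  have hGα : 0 < Real.Gamma α := Real.Gamma_pos_of_pos hα
  have hrefl := Real.Gamma_mul_Gamma_one_sub α
  have hpi := Real.pi_pos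
  rw [eq_div_iff hsin.ne'] at hrefl
  have hc : 1 / Real.Gamma (1 - α) = 2 * Real.sin (Real.pi * α) / Real.pi * (Real.Gamma α / 2) := by
    field_simp
    rw [mul_comm α π]
    linear_combination -1 * hrefl
  rw [hc]
  ring
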